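/- Let N ≤ N_R be positive integers and a ∈ ℝ. The function t ↦ p(t, a) defined by the double series p(t, a) = Σ_{n=0}^∞ A_n(a) Σ_{m=0}^n binom(n,m) (−1)^m t^{N+n−m−1} e^{−t}/(N+n−m−1)! is infinitely differentiable on (0, ∞), and for every t > 0 it satisfies the third-order ordinary differential equation − t² p^{(3)}(t,a) − 2 t² p^{(2)}(t,a) − t² p^{(1)}(t,a) + (2N − 4) t p^{(2)}(t,a) − (6 − 2N − N_R − a) t p^{(1)}(t,a) + (N_R − 2) t p(t,a) − (N − 1)(N − 2) p^{(1)}(t,a) + (N − 1)(2 − N_R − a) p(t,a) = 0. -/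

import Mathlib

/-- Pochhammer symbol `(x)ₙ = x (x+1) ⋯ (x+n-1)`. -/
noncomputable def poch (x : ℝ) (n : ℕ) : ℝ := ∏ i ∈ Finset.range n, (x + i)

/-- `A_n(a) = ((N)_n/(N_R)_n) aⁿ/n!`. -/
noncomputable def Acoef (N NR : ℕ) (a : ℝ) (n : ℕ) : ℝ :=
  (poch N n / poch NR n) * a ^ n / (n.factorial : ℝ)

/-- The (normalized) ZF SNR density
`p(t,a) = Σ_n A_n(a) Σ_{m=0}^n C(n,m) (−1)^m t^{N+n−m−1} e^{−t}/(N+n−m−1)!`. -/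
noncomputable def pdfZF (N NR : ℕ) (t a : ℝ) : ℝ :=
  ∑' n : ℕ, Acoef N NR a n *
    ∑ m ∈ Finset.range (n + 1),
      (n.choose m : ℝ) * (-1 : ℝ) ^ m * t ^ (N + n - m - 1) * Real.exp (-t)
        / ((N + n - m - 1).factorial : ℝ)

/-!
Put `φₖ(t) = tᵏ e⁻ᵗ / k!` for `k ≥ 0` and `φₖ = 0` for `k < 0`. Then `φₖ' = φₖ₋₁ - φₖ` and
`t φₖ = (k + 1) φₖ₊₁`, so differentiation in `t` acts on the index as a backward difference `D`,
and the `n`-th summand of `p` is `fₙ = Aₙ (-1)ⁿ Dⁿ φ_{N+n-1}`. On `t ≥ 0` every `Dʳ φₖ` is bounded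
by `2ʳ`, so the series may be differentiated termwise as often as we like.

Write the equation as `L₀ p + a M p = 0` with `M p = t p' - (N - 1) p`. The recursions of `Dʳ φₖ`
in `r` and under multiplication by `t` give `L₀ f₀ = 0` and, with `gₙ = (-1)ⁿ Dⁿ φ_{N+n}`,
`L₀ fₙ₊₁ = Aₙ₊₁ (n + 1)(n + N_R) gₙ = a Aₙ (N + n) gₙ = -a M fₙ`;
so the series `Σ L₀ fₙ` and `a Σ M fₙ` cancel.
-/

open Finset fwdDiff
open scoped ContDiff

lemma hasSum_add_of_succ_eq_neg {G : Type*} [AddCommGroup G] [TopologicalSpace G]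
    [IsTopologicalAddGroup G] {u v : ℕ → G} {s : G} (hv : HasSum v s) (h₀ : u 0 = 0)
    (hsucc : ∀ n, u (n + 1) = -v n) : HasSum (fun n => u n + v n) 0 := by
  have hu : HasSum u (-s) := by
    simpa [h₀] using (hasSum_nat_add_iff (f := u) 1).1 (by simpa only [hsucc] using hv.neg)
  simpa using hu.add hv

section

variable {𝕜 F : Type*} [NontriviallyNormedField 𝕜] [NormedAddCommGroup F] [NormedSpace 𝕜 F]
  {f : ℕ → 𝕜 → F} {U : Set 𝕜}

lemma iteratedDeriv_eq_of_hasDerivAt_succ (hU : IsOpen U)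
    (hf : ∀ q, ∀ x ∈ U, HasDerivAt (f q) (f (q + 1) x) x) (j : ℕ) {x : 𝕜} (hx : x ∈ U) :
    iteratedDeriv j (f 0) x = f j x := by
  induction j generalizing x with
  | zero => rfl
  | succ j ih =>
    have hj : iteratedDeriv j (f 0) =ᶠ[nhds x] f j := by
      filter_upwards [hU.mem_nhds hx] with y hy using ih hy
    rw [iteratedDeriv_succ, hj.deriv_eq, (hf j x hx).deriv]

lemma contDiffOn_of_hasDerivAt_succ (hU : IsOpen U)
    (hf : ∀ q, ∀ x ∈ U, HasDerivAt (f q) (f (q + 1) x) x) : ContDiffOn 𝕜 ∞ (f 0) U := by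
  refine contDiffOn_infty.2 fun m => ?_
  induction m generalizing f with
  | zero => exact contDiffOn_zero.2 fun x hx => (hf 0 x hx).continuousAt.continuousWithinAt
  | succ m ih =>
    rw [Nat.cast_succ, contDiffOn_succ_iff_deriv_of_isOpen hU]
    refine ⟨fun x hx => (hf 0 x hx).differentiableAt.differentiableWithinAt, by simp, ?_⟩
    exact (ih fun q x hx => hf (q + 1) x hx).congr fun x hx => (hf 0 x hx).deriv

end

-- Extended by zero to `k < 0`, so that `erlang k' = erlang (k - 1) - erlang k` for every `k`.
noncomputable def erlang (k : ℤ) (t : ℝ) : ℝ :=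
  if 0 ≤ k then t ^ k.toNat * Real.exp (-t) / k.toNat.factorial else 0

lemma erlang_natCast (k : ℕ) (t : ℝ) : erlang k t = t ^ k * Real.exp (-t) / k.factorial := by
  simp [erlang]

lemma erlang_of_neg {k : ℤ} (hk : k < 0) : erlang k = 0 := by
  funext t
  simp [erlang, not_le.2 hk]

lemma abs_erlang_le_one (k : ℤ) {t : ℝ} (ht : 0 ≤ t) : |erlang k t| ≤ 1 := by
  rcases lt_or_ge k 0 with hk | hk
  · simp [erlang_of_neg hk]
  · lift k to ℕ using hk
    rw [erlang_natCast, abs_of_nonneg (by positivity), mul_div_right_comm, Real.exp_neg,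
      ← div_eq_mul_inv, div_le_one (Real.exp_pos t)]
    exact Real.pow_div_factorial_le_exp t ht k

lemma mul_erlang (k : ℤ) (t : ℝ) : t * erlang k t = (k + 1) * erlang (k + 1) t := by
  rcases lt_trichotomy k (-1) with hk | rfl | hk
  · simp [erlang_of_neg (by omega : k < 0), erlang_of_neg (by omega : k + 1 < 0)]
  · simp [erlang_of_neg (by norm_num : (-1 : ℤ) < 0)]
  · lift k to ℕ using (by omega)
    rw [show (k : ℤ) + 1 = ((k + 1 : ℕ) : ℤ) by push_cast; ring, erlang_natCast, erlang_natCast,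
      Nat.factorial_succ]
    push_cast
    field_simp
    ring

lemma hasDerivAt_erlang (k : ℤ) (t : ℝ) :
    HasDerivAt (erlang k) (erlang (k - 1) t - erlang k t) t := by
  rcases lt_or_ge k 0 with hk | hk
  · simp [erlang_of_neg hk, erlang_of_neg (by omega : k - 1 < 0)]
  lift k to ℕ using hk
  have hexp : HasDerivAt (fun s => Real.exp (-s)) (-Real.exp (-t)) t := by
    simpa using (hasDerivAt_neg t).exp
  have hk : erlang k = fun s => s ^ k * Real.exp (-s) / k.factorial :=
    funext (erlang_natCast k)
  rw [hk]
  cases k with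
  | zero => simpa [erlang_of_neg (by norm_num : (-1 : ℤ) < 0)] using hexp
  | succ k =>
    rw [show ((k + 1 : ℕ) : ℤ) - 1 = k by push_cast; ring, erlang_natCast]
    refine (((hasDerivAt_pow (k + 1) t).mul hexp).div_const _).congr_deriv ?_
    rw [Nat.factorial_succ]
    push_cast
    field_simp
    ring

-- By `hasDerivAt_erlangDeriv` this is the `r`-th `t`-derivative of `erlang k`.
noncomputable def erlangDeriv (r : ℕ) (k : ℤ) : ℝ → ℝ := (Δ_[-1])^[r] erlang k

lemma erlangDeriv_zero (k : ℤ) : erlangDeriv 0 k = erlang k := rfl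

lemma erlangDeriv_succ (r : ℕ) (k : ℤ) (t : ℝ) :
    erlangDeriv (r + 1) k t = erlangDeriv r (k - 1) t - erlangDeriv r k t := by
  simp only [erlangDeriv, Function.iterate_succ_apply', fwdDiff, Pi.sub_apply, sub_eq_add_neg]

lemma hasDerivAt_erlangDeriv (r : ℕ) (k : ℤ) (t : ℝ) :
    HasDerivAt (erlangDeriv r k) (erlangDeriv (r + 1) k t) t := by
  induction r generalizing k with
  | zero => simpa [erlangDeriv_succ, erlangDeriv_zero] using hasDerivAt_erlang k t
  | succ r ih =>
    rw [show erlangDeriv (r + 1) k = fun s => erlangDeriv r (k - 1) s - erlangDeriv r k s from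
      funext (erlangDeriv_succ r k), erlangDeriv_succ (r + 1)]
    exact (ih (k - 1)).sub (ih k)

lemma abs_erlangDeriv_le (r : ℕ) (k : ℤ) {t : ℝ} (ht : 0 ≤ t) : |erlangDeriv r k t| ≤ 2 ^ r := by
  induction r generalizing k with
  | zero => simpa [erlangDeriv_zero] using abs_erlang_le_one k ht
  | succ r ih =>
    rw [erlangDeriv_succ, pow_succ]
    linarith [abs_sub (erlangDeriv r (k - 1) t) (erlangDeriv r k t), ih (k - 1), ih k]

lemma mul_erlangDeriv_succ (r : ℕ) (k : ℤ) (t : ℝ) :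
    t * erlangDeriv (r + 1) k t
      = (k + 1) * erlangDeriv (r + 1) (k + 1) t - (r + 1) * erlangDeriv r k t := by
  induction r generalizing k with
  | zero =>
    have h := mul_erlang (k - 1) t
    simp only [Int.cast_sub, Int.cast_one, sub_add_cancel] at h
    simp only [erlangDeriv_succ, erlangDeriv_zero, add_sub_cancel_right, Nat.cast_zero, zero_add]
    linear_combination h - mul_erlang k t
  | succ r ih =>
    have h := ih (k - 1)
    simp only [Int.cast_sub, Int.cast_one, sub_add_cancel] at h
    rw [erlangDeriv_succ (r + 1) k, erlangDeriv_succ (r + 1) (k + 1), add_sub_cancel_right]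
    push_cast
    linear_combination h - ih k + (r + 1) * erlangDeriv_succ r k t

-- The left-hand side of the equation, evaluated at `y₀, …, y₃ = p, p', p'', p'''`.
noncomputable def zfODE (N NR : ℕ) (a t y₀ y₁ y₂ y₃ : ℝ) : ℝ :=
  -t ^ 2 * y₃ - 2 * t ^ 2 * y₂ - t ^ 2 * y₁ + (2 * (N : ℝ) - 4) * t * y₂
    - (6 - 2 * (N : ℝ) - (NR : ℝ) - a) * t * y₁ + ((NR : ℝ) - 2) * t * y₀
    - ((N : ℝ) - 1) * ((N : ℝ) - 2) * y₁ + ((N : ℝ) - 1) * (2 - (NR : ℝ) - a) * y₀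

/- For `a = 0` the operator factors as `L₀ h = ε (Y h)` with `ε h = t (h + h') - (N - 1) h` and
`Y h = -t (h'' + h') + (N - 2) h' + (N_R - 2) h`, and `Y` has `h = erlangDeriv r (N + r - 1)` as an
eigenfunction with eigenvalue `r + N_R - 1`; here `h + h' = erlangDeriv r (N + r - 2)`. -/
lemma zfODE_erlangDeriv (N NR r : ℕ) {k : ℤ} (hk : k = N + r - 1) (t : ℝ) :
    zfODE N NR 0 t (erlangDeriv r k t) (erlangDeriv (r + 1) k t) (erlangDeriv (r + 2) k t)
        (erlangDeriv (r + 3) k t)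
      = (r + NR - 1) * (t * erlangDeriv r (k - 1) t - (N - 1) * erlangDeriv r k t) := by
  have hk' : (k : ℝ) = N + r - 1 := by rw [hk]; push_cast; ring
  have P₀ := erlangDeriv_succ r k t
  have P₁ := erlangDeriv_succ (r + 1) k t
  have P₂ := erlangDeriv_succ (r + 2) k t
  have T₁ := mul_erlangDeriv_succ r (k - 1) t
  have T₂ := mul_erlangDeriv_succ (r + 1) (k - 1) t
  simp only [Int.cast_sub, Int.cast_one, sub_add_cancel, hk', add_assoc, Nat.reduceAdd,
    Nat.cast_add, Nat.cast_one] at P₁ P₂ T₁ T₂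
  unfold zfODE
  linear_combination (t - (N - 1)) * (-t * P₁ - T₁ - (r + 1) * P₀)
    + t * (-t * P₂ - T₂ - (r + 2) * P₁) + t * (r + NR - 1) * P₀

lemma zfODE_erlangDeriv_succ (N NR n : ℕ) {k : ℤ} (hk : k = N + n) (t : ℝ) :
    zfODE N NR 0 t (erlangDeriv (n + 1) k t) (erlangDeriv (n + 1 + 1) k t)
        (erlangDeriv (n + 1 + 2) k t) (erlangDeriv (n + 1 + 3) k t)
      = -((n + 1) * (n + NR)) * erlangDeriv n k t := by
  have hk' : (k : ℝ) = N + n := by rw [hk]; push_cast; ring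
  have T := mul_erlangDeriv_succ n (k - 1) t
  simp only [Int.cast_sub, Int.cast_one, sub_add_cancel, hk'] at T
  rw [zfODE_erlangDeriv N NR (n + 1) (by rw [hk]; push_cast; ring)]
  push_cast
  linear_combination (n + NR) * T + (n + NR) * (n + 1) * erlangDeriv_succ n k t

lemma mul_erlangDeriv_succ_sub (N n : ℕ) {k : ℤ} (hk : k = N + n - 1) (t : ℝ) :
    t * erlangDeriv (n + 1) k t - (N - 1) * erlangDeriv n k t
      = -(N + n) * erlangDeriv n (k + 1) t := by
  have hk' : (k : ℝ) = N + n - 1 := by rw [hk]; push_cast; ring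
  have P := erlangDeriv_succ n (k + 1) t
  rw [add_sub_cancel_right] at P
  rw [mul_erlangDeriv_succ, hk']
  linear_combination (N + n) * P

lemma poch_succ (x : ℝ) (n : ℕ) : poch x (n + 1) = poch x n * (x + n) :=
  prod_range_succ _ _

lemma poch_pos {x : ℝ} (hx : 0 < x) (n : ℕ) : 0 < poch x n :=
  prod_pos fun _ _ => by positivity

lemma poch_le_poch {x y : ℝ} (hx : 0 ≤ x) (hxy : x ≤ y) (n : ℕ) : poch x n ≤ poch y n :=
  prod_le_prod (fun _ _ => by positivity) fun _ _ => by linarith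

lemma Acoef_succ_mul {N NR : ℕ} (hNR : 0 < NR) (a : ℝ) (n : ℕ) :
    Acoef N NR a (n + 1) * ((n + 1) * (n + NR)) = a * Acoef N NR a n * (N + n) := by
  have := (poch_pos (Nat.cast_pos.2 hNR) n).ne'
  rw [Acoef, Acoef, poch_succ, poch_succ, Nat.factorial_succ]
  push_cast
  field_simp
  ring

lemma abs_Acoef_le {N NR : ℕ} (hN : 0 < N) (hNNR : N ≤ NR) (a : ℝ) (n : ℕ) :
    |Acoef N NR a n| ≤ |a| ^ n / n.factorial := by
  have hN' : (0 : ℝ) < N := Nat.cast_pos.2 hN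
  have hNR' : (0 : ℝ) < NR := hN'.trans_le (Nat.cast_le.2 hNNR)
  rw [Acoef, abs_div, abs_mul, abs_pow, Nat.abs_cast,
    abs_of_nonneg (div_nonneg (poch_pos hN' n).le (poch_pos hNR' n).le)]
  gcongr
  exact mul_le_of_le_one_left (by positivity)
    (div_le_one_of_le₀ (poch_le_poch hN'.le (Nat.cast_le.2 hNNR) n) (poch_pos hNR' n).le)

-- The `q`-th `t`-derivative of the `n`-th summand of `pdfZF` (see `pdfZF_eq_tsum_zfTerm`).
noncomputable def zfTerm (N NR : ℕ) (a : ℝ) (q n : ℕ) (t : ℝ) : ℝ :=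
  Acoef N NR a n * (-1) ^ n * erlangDeriv (n + q) (N + n - 1) t

lemma hasDerivAt_zfTerm (N NR : ℕ) (a : ℝ) (q n : ℕ) (t : ℝ) :
    HasDerivAt (zfTerm N NR a q n) (zfTerm N NR a (q + 1) n t) t :=
  (hasDerivAt_erlangDeriv _ _ t).const_mul _

lemma abs_zfTerm_le {N NR : ℕ} (hN : 0 < N) (hNNR : N ≤ NR) (a : ℝ) (q n : ℕ) {t : ℝ}
    (ht : 0 ≤ t) : |zfTerm N NR a q n t| ≤ 2 ^ q * ((2 * |a|) ^ n / n.factorial) := by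
  calc |zfTerm N NR a q n t|
      = |Acoef N NR a n| * |erlangDeriv (n + q) (N + n - 1) t| := by
        simp [zfTerm, abs_mul]
    _ ≤ |a| ^ n / n.factorial * 2 ^ (n + q) :=
        mul_le_mul (abs_Acoef_le hN hNNR a n) (abs_erlangDeriv_le _ _ ht) (abs_nonneg _)
          (by positivity)
    _ = 2 ^ q * ((2 * |a|) ^ n / n.factorial) := by ring

lemma summable_zfTerm {N NR : ℕ} (hN : 0 < N) (hNNR : N ≤ NR) (a : ℝ) (q : ℕ) {t : ℝ}
    (ht : 0 ≤ t) : Summable fun n => zfTerm N NR a q n t :=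
  .of_norm_bounded ((Real.summable_pow_div_factorial _).mul_left _)
    fun n => abs_zfTerm_le hN hNNR a q n ht

lemma hasDerivAt_tsum_zfTerm {N NR : ℕ} (hN : 0 < N) (hNNR : N ≤ NR) (a : ℝ) (q : ℕ) {t : ℝ}
    (ht : 0 < t) :
    HasDerivAt (fun s => ∑' n, zfTerm N NR a q n s) (∑' n, zfTerm N NR a (q + 1) n t) t :=
  hasDerivAt_tsum_of_isPreconnected ((Real.summable_pow_div_factorial (2 * |a|)).mul_left _)
    isOpen_Ioi isPreconnected_Ioi (fun n s _ => hasDerivAt_zfTerm N NR a q n s)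
    (fun n _ hs => abs_zfTerm_le hN hNNR a (q + 1) n hs.le) (Set.mem_Ioi.2 one_pos)
    (summable_zfTerm hN hNNR a q zero_le_one) ht

lemma zfODE_zfTerm_zero (N NR : ℕ) (a t : ℝ) :
    zfODE N NR 0 t (zfTerm N NR a 0 0 t) (zfTerm N NR a 1 0 t) (zfTerm N NR a 2 0 t)
      (zfTerm N NR a 3 0 t) = 0 := by
  have h := zfODE_erlangDeriv N NR 0 (k := N - 1) (by simp) t
  have T := mul_erlang (N - 1 - 1) t
  simp only [Int.cast_sub, Int.cast_one, Int.cast_natCast, sub_add_cancel] at T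
  simp only [zfTerm, zfODE, erlangDeriv_zero, CharP.cast_eq_zero, add_zero, zero_add, pow_zero,
    mul_one] at h ⊢
  linear_combination Acoef N NR a 0 * h + Acoef N NR a 0 * (NR - 1) * T

lemma zfODE_zfTerm_succ {N NR : ℕ} (hNR : 0 < NR) (a : ℝ) (n : ℕ) (t : ℝ) :
    zfODE N NR 0 t (zfTerm N NR a 0 (n + 1) t) (zfTerm N NR a 1 (n + 1) t)
        (zfTerm N NR a 2 (n + 1) t) (zfTerm N NR a 3 (n + 1) t)
      = -(a * (t * zfTerm N NR a 1 n t - (N - 1) * zfTerm N NR a 0 n t)) := by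
  have hk : (N : ℤ) + ((n + 1 : ℕ) : ℤ) - 1 = N + n - 1 + 1 := by push_cast; ring
  have hL := zfODE_erlangDeriv_succ N NR n (k := N + n - 1 + 1) (by ring) t
  have hM := mul_erlangDeriv_succ_sub N n (k := N + n - 1) rfl t
  have hA := Acoef_succ_mul (N := N) hNR a n
  simp only [zfTerm, zfODE, hk, add_zero] at hL ⊢
  linear_combination (-1) ^ (n + 1) * Acoef N NR a (n + 1) * hL
    + a * Acoef N NR a n * (-1) ^ n * hM
    + (-1) ^ n * erlangDeriv n (N + n - 1 + 1) t * hA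

lemma hasSum_zfODE (N NR : ℕ) (a t : ℝ) {f₀ f₁ f₂ f₃ : ℕ → ℝ} {s₀ s₁ s₂ s₃ : ℝ}
    (h₀ : HasSum f₀ s₀) (h₁ : HasSum f₁ s₁) (h₂ : HasSum f₂ s₂) (h₃ : HasSum f₃ s₃) :
    HasSum (fun n => zfODE N NR a t (f₀ n) (f₁ n) (f₂ n) (f₃ n)) (zfODE N NR a t s₀ s₁ s₂ s₃) := by
  have e (y₀ y₁ y₂ y₃ : ℝ) : zfODE N NR a t y₀ y₁ y₂ y₃
      = ((NR - 2) * t + (N - 1) * (2 - NR - a)) * y₀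
        + (-t ^ 2 - (6 - 2 * N - NR - a) * t - (N - 1) * (N - 2)) * y₁
        + (-2 * t ^ 2 + (2 * N - 4) * t) * y₂ + -t ^ 2 * y₃ := by
    unfold zfODE
    ring
  simp only [e]
  exact (((h₀.mul_left _).add (h₁.mul_left _)).add (h₂.mul_left _)).add (h₃.mul_left _)

lemma neg_one_pow_mul_erlangDeriv {N : ℕ} (hN : 0 < N) (n : ℕ) (t : ℝ) :
    (-1) ^ n * erlangDeriv n (N + n - 1) t
      = ∑ m ∈ range (n + 1), (n.choose m : ℝ) * (-1) ^ m * t ^ (N + n - m - 1) * Real.exp (-t)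
          / (N + n - m - 1).factorial := by
  rw [erlangDeriv, fwdDiff_iter_eq_sum_shift, Finset.sum_apply, Finset.mul_sum]
  refine sum_congr rfl fun m hm => ?_
  have hmn : m ≤ n := Nat.lt_succ_iff.1 (mem_range.1 hm)
  have hk : (N : ℤ) + n - 1 + m • (-1) = ((N + n - m - 1 : ℕ) : ℤ) := by
    simp only [smul_neg, nsmul_eq_mul, mul_one]
    omega
  have hsign : (-1 : ℝ) ^ n * (-1) ^ (n - m) = (-1) ^ m := by
    rw [← pow_add, show n + (n - m) = m + 2 * (n - m) by omega, pow_add, pow_mul]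
    norm_num
  rw [Pi.smul_apply, hk, erlang_natCast, zsmul_eq_mul, ← hsign]
  push_cast
  ring

lemma pdfZF_eq_tsum_zfTerm {N : ℕ} (hN : 0 < N) (NR : ℕ) (a t : ℝ) :
    pdfZF N NR t a = ∑' n, zfTerm N NR a 0 n t := by
  refine tsum_congr fun n => ?_
  rw [zfTerm, mul_assoc, add_zero, neg_one_pow_mul_erlangDeriv hN]

lemma zfODE_tsum_zfTerm {N NR : ℕ} (hN : 0 < N) (hNNR : N ≤ NR) (a : ℝ) {t : ℝ} (ht : 0 ≤ t) :
    zfODE N NR a t (∑' n, zfTerm N NR a 0 n t) (∑' n, zfTerm N NR a 1 n t)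
      (∑' n, zfTerm N NR a 2 n t) (∑' n, zfTerm N NR a 3 n t) = 0 := by
  have hs q := (summable_zfTerm hN hNNR a q ht).hasSum
  have hsplit := hasSum_add_of_succ_eq_neg
    (u := fun n => zfODE N NR 0 t (zfTerm N NR a 0 n t) (zfTerm N NR a 1 n t)
      (zfTerm N NR a 2 n t) (zfTerm N NR a 3 n t))
    ((((hs 1).mul_left t).sub ((hs 0).mul_left (N - 1 : ℝ))).mul_left a)
    (zfODE_zfTerm_zero N NR a t) (zfODE_zfTerm_succ (hN.trans_le hNNR) a · t)
  refine (hasSum_zfODE N NR a t (hs 0) (hs 1) (hs 2) (hs 3)).unique (hsplit.congr_fun fun n => ?_)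
  -- `zfODE` at `a` is its value at `0` plus `a (t y₁ - (N - 1) y₀)`
  unfold zfODE
  ring

/-- `t ↦ p(t,a)` is infinitely differentiable on `(0,∞)` and satisfies there the
third-order ODE
`−t² p⁽³⁾ − 2t² p⁽²⁾ − t² p⁽¹⁾ + (2N−4) t p⁽²⁾ − (6−2N−N_R−a) t p⁽¹⁾ + (N_R−2) t p
  − (N−1)(N−2) p⁽¹⁾ + (N−1)(2−N_R−a) p = 0`. -/
theorem stmt10 (N NR : ℕ) (hN : 0 < N) (hNNR : N ≤ NR) (a : ℝ) :
    ContDiffOn ℝ (⊤ : ℕ∞) (fun t => pdfZF N NR t a) (Set.Ioi 0) ∧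
    ∀ t : ℝ, 0 < t →
      -t ^ 2 * iteratedDeriv 3 (fun t' => pdfZF N NR t' a) t
        - 2 * t ^ 2 * iteratedDeriv 2 (fun t' => pdfZF N NR t' a) t
        - t ^ 2 * deriv (fun t' => pdfZF N NR t' a) t
        + (2 * (N : ℝ) - 4) * t * iteratedDeriv 2 (fun t' => pdfZF N NR t' a) t
        - (6 - 2 * (N : ℝ) - (NR : ℝ) - a) * t * deriv (fun t' => pdfZF N NR t' a) t
        + ((NR : ℝ) - 2) * t * pdfZF N NR t a
        - ((N : ℝ) - 1) * ((N : ℝ) - 2) * deriv (fun t' => pdfZF N NR t' a) t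
        + ((N : ℝ) - 1) * (2 - (NR : ℝ) - a) * pdfZF N NR t a = 0 := by
  let F (q : ℕ) (t : ℝ) : ℝ := ∑' n, zfTerm N NR a q n t
  have hp : (fun t => pdfZF N NR t a) = F 0 := funext (pdfZF_eq_tsum_zfTerm hN NR a)
  have hF : ∀ q, ∀ t ∈ Set.Ioi (0 : ℝ), HasDerivAt (F q) (F (q + 1) t) t :=
    fun q _ ht => hasDerivAt_tsum_zfTerm hN hNNR a q ht
  refine ⟨hp ▸ contDiffOn_of_hasDerivAt_succ isOpen_Ioi hF, fun t ht => ?_⟩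
  have hp₀ : pdfZF N NR t a = F 0 t := congrFun hp t
  rw [hp₀, ← iteratedDeriv_one, hp]
  simp only [iteratedDeriv_eq_of_hasDerivAt_succ isOpen_Ioi hF _ ht]
  exact zfODE_tsum_zfTerm hN hNNR a ht.le
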